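/- arXiv:2409.20495 — 2 statements merged into one kernel-verified Lean document; each statement's English description precedes it below -/
import Mathlib

section
/- Let G be a nontrivial finite abelian group, n ≥ 1, let (σ,ρ) be a double partition of n, let H be the stabiliser in W = G ≀ S_n of some fixed (σ,ρ)-tabloid, and let Y be a nonempty (σ,ρ)-transitive subset of W. Then |Y|·|H| ≥ |W|, and equality holds if and only if Y is a (σ,ρ)-clique, i.e., for all distinct x, y ∈ Y the element x⁻¹y stabilises no (σ,ρ)-tabloid; moreover, in case of equality Y is sharply (σ,ρ)-transitive (the transitivity constant is 1). -/
/-- The monoid hom `Perm (Fin n) →* MulAut (Fin n → G)`, permuting coordinates. -/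
def permMulAut (G : Type*) [CommGroup G] (n : ℕ) :
    Equiv.Perm (Fin n) →* MulAut (Fin n → G) where
  toFun π := MulEquiv.arrowCongr π (MulEquiv.refl G)
  map_one' := by ext f a; rfl
  map_mul' := by intro π σ; ext f a; rfl

/-- The wreath product `G ≀ Sₙ`. -/
abbrev Wr (G : Type*) [CommGroup G] (n : ℕ) :=
  SemidirectProduct (Fin n → G) (Equiv.Perm (Fin n)) (permMulAut G n)

/-- The natural action of `G ≀ Sₙ` on `G × [n]`. -/
def wAct {G : Type*} [CommGroup G] {n : ℕ} (w : Wr G n) (p : G × Fin n) : G × Fin n :=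
  (p.1 * w.left (w.right p.2), w.right p.2)

/-- The `i`-th largest part of a multiset of naturals (0-indexed; `0` beyond the last part). -/
def dparts (s : Multiset ℕ) (i : ℕ) : ℕ := ((s.sort (· ≤ ·)).reverse).getD i 0

/-- `s` is dominated by `t`. -/
def msDom (s t : Multiset ℕ) : Prop :=
  ∀ k, (((s.sort (· ≤ ·)).reverse).take k).sum ≤ (((t.sort (· ≤ ·)).reverse).take k).sum

/-- `T` is a `(σ,ρ)`-tabloid: the first component assigns to each element of `[n]` a block
(`Sum.inl i` is the block of the `i+1`-st largest part of `σ`, `Sum.inr j` that of `ρ`),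
blocks have the prescribed sizes, and the colouring (second component)
is normalised to `1` on the `ρ`-blocks. -/
def IsTabloid (G : Type*) [CommGroup G] (n : ℕ) (σ ρ : Multiset ℕ)
    (T : (Fin n → ℕ ⊕ ℕ) × (Fin n → G)) : Prop :=
  (∀ i, Nat.card {a : Fin n // T.1 a = Sum.inl i} = dparts σ i) ∧
  (∀ j, Nat.card {a : Fin n // T.1 a = Sum.inr j} = dparts ρ j) ∧
  (∀ a j, T.1 a = Sum.inr j → T.2 a = 1)

/-- The action of the wreath product on (raw) tabloids. -/
def tabAct {G : Type*} [CommGroup G] {n : ℕ} (w : Wr G n)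
    (T : (Fin n → ℕ ⊕ ℕ) × (Fin n → G)) : (Fin n → ℕ ⊕ ℕ) × (Fin n → G) :=
  ⟨fun a => T.1 (w.right⁻¹ a),
   fun a => match T.1 (w.right⁻¹ a) with
     | Sum.inl _ => T.2 (w.right⁻¹ a) * w.left a
     | Sum.inr _ => 1⟩

/-- A subset `Y` of `W` is transitive on `S ⊆ Ω` (w.r.t. an action `act`): there is a
constant `c > 0` such that any `a ∈ S` is mapped to any `b ∈ S` by exactly `c` elements of `Y`. -/
def IsTransitiveOn {W Ω : Type*} (act : W → Ω → Ω) (S : Set Ω) (Y : Set W) : Prop :=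
  ∃ c : ℕ, 0 < c ∧ ∀ a ∈ S, ∀ b ∈ S, Nat.card {y : W // y ∈ Y ∧ act y a = b} = c

/-- `Y ⊆ G ≀ Sₙ` is `(σ,ρ)`-transitive. -/
def DPTransitive (G : Type*) [CommGroup G] (n : ℕ) (σ ρ : Multiset ℕ)
    (Y : Set (Wr G n)) : Prop :=
  IsTransitiveOn tabAct {T | IsTabloid G n σ ρ T} Y

/-- `(σ,ρ) ≽_G (τ,π)` : every `(σ,ρ)`-transitive subset of `G ≀ Sₙ` is `(τ,π)`-transitive. -/
def DPDom (G : Type*) [CommGroup G] (n : ℕ) (σ ρ τ π : Multiset ℕ) : Prop :=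
  ∀ Y : Set (Wr G n), DPTransitive G n σ ρ Y → DPTransitive G n τ π Y

/-- The partition obtained by adding `k` to the `r`-th largest part (1-indexed). -/
def addPart (s : Multiset ℕ) (r k : ℕ) : Multiset ℕ :=
  s.erase (dparts s (r - 1)) + {dparts s (r - 1) + k}

/-!
If every tabloid is sent to every other by exactly `c` elements of `Y`, then counting `Y` along
the orbit map `y ↦ y • T₀` gives `|Y| = c·|Ω|`, where `Ω` is the set of tabloids, on which `W`
acts transitively; orbit–stabiliser gives `|W| = |Ω|·|H|`. Hence `|Y|·|H| = c·|W|`, and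
equality in the bound means `c = 1`. Since `x • a = y • a` iff `x⁻¹ * y` fixes `a`, `c ≤ 1` is
exactly the clique condition.
-/

namespace MulAction

variable {W Ω : Type*} [Group W] [MulAction W Ω] {Y : Set W}

theorem card_eq_card_mul_of_card_fiber [Finite W] [IsPretransitive W Ω] {c : ℕ}
    (hfiber : ∀ a b : Ω, Nat.card {y : W // y ∈ Y ∧ y • a = b} = c) (a : Ω) :
    Nat.card Y = Nat.card Ω * c := by
  have : Finite Ω := Finite.of_surjective (· • a) (surjective_smul W a)
  have := Fintype.ofFinite Ω
  calc Nat.card Y = Nat.card (Σ b : Ω, {y : Y // y.1 • a = b}) :=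
        Nat.card_congr (Equiv.sigmaFiberEquiv _).symm
    _ = ∑ b : Ω, Nat.card {y : W // y ∈ Y ∧ y • a = b} := by
        rw [Nat.card_sigma]
        exact Finset.sum_congr rfl fun b _ => Nat.card_congr
          (Equiv.subtypeSubtypeEquivSubtypeInter (· ∈ Y) (· • a = b))
    _ = Nat.card Ω * c := by simp [hfiber]

theorem card_mul_card_stabilizer_of_card_fiber [Finite W] [IsPretransitive W Ω] {c : ℕ}
    (hfiber : ∀ a b : Ω, Nat.card {y : W // y ∈ Y ∧ y • a = b} = c) (a : Ω) :
    Nat.card Y * Nat.card (stabilizer W a) = c * Nat.card W := by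
  rw [← (stabilizer W a).card_mul_index, index_stabilizer_of_transitive,
    card_eq_card_mul_of_card_fiber hfiber a]
  ring

theorem subsingleton_fibers_iff :
    (∀ a b : Ω, Subsingleton {y : W // y ∈ Y ∧ y • a = b}) ↔
      ∀ x ∈ Y, ∀ y ∈ Y, x ≠ y → ∀ a : Ω, (x⁻¹ * y) • a ≠ a := by
  constructor
  · intro h x hx y hy hxy a hfix
    have hya : y • a = x • a := by
      calc y • a = x • (x⁻¹ * y) • a := by rw [smul_smul, mul_inv_cancel_left]
        _ = x • a := by rw [hfix]
    exact hxy (congrArg Subtype.val ((h a (x • a)).elim ⟨x, hx, rfl⟩ ⟨y, hy, hya⟩))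
  · refine fun h a b => ⟨fun ⟨x, hx, hxa⟩ ⟨y, hy, hya⟩ => ?_⟩
    by_contra hne
    refine h x hx y hy (fun hxy => hne (by subst hxy; rfl)) a ?_
    rw [← smul_smul, hya, ← hxa, inv_smul_smul]

theorem le_one_iff_of_card_fiber [Finite W] [Nonempty Ω] {c : ℕ}
    (hfiber : ∀ a b : Ω, Nat.card {y : W // y ∈ Y ∧ y • a = b} = c) :
    c ≤ 1 ↔ ∀ x ∈ Y, ∀ y ∈ Y, x ≠ y → ∀ a : Ω, (x⁻¹ * y) • a ≠ a := by
  simp_rw [← subsingleton_fibers_iff, ← Finite.card_le_one_iff_subsingleton, hfiber]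
  exact ⟨fun h _ _ => h, fun h => h (Classical.arbitrary Ω) (Classical.arbitrary Ω)⟩

end MulAction

section Tabloid

variable {G : Type} [CommGroup G] {n : ℕ} {σ ρ : Multiset ℕ}

theorem tabAct_mul (u v : Wr G n) (T : (Fin n → ℕ ⊕ ℕ) × (Fin n → G)) :
    tabAct (u * v) T = tabAct u (tabAct v T) := by
  have hright : ∀ a, (u * v).right⁻¹ a = v.right⁻¹ (u.right⁻¹ a) := fun a => rfl
  have hleft : ∀ a, (u * v).left a = u.left a * v.left (u.right⁻¹ a) := fun a => rfl
  refine Prod.ext (funext fun a => congrArg T.1 (hright a)) (funext fun a => ?_)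
  simp only [tabAct, hright, hleft]
  rcases T.1 (v.right⁻¹ (u.right⁻¹ a)) with i | j <;> simp [mul_comm, mul_assoc]

theorem tabAct_one {T : (Fin n → ℕ ⊕ ℕ) × (Fin n → G)}
    (hT : ∀ a j, T.1 a = Sum.inr j → T.2 a = 1) :
    tabAct (1 : Wr G n) T = T := by
  have hright : (1 : Wr G n).right⁻¹ = 1 := inv_one
  refine Prod.ext rfl (funext fun a => ?_)
  simp only [tabAct, hright, Equiv.Perm.one_apply]
  rcases h : T.1 a with i | j
  · simp
  · exact (hT a j h).symm

theorem isTabloid_tabAct (w : Wr G n) {T : (Fin n → ℕ ⊕ ℕ) × (Fin n → G)}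
    (hT : IsTabloid G n σ ρ T) : IsTabloid G n σ ρ (tabAct w T) := by
  obtain ⟨hσ, hρ, hnorm⟩ := hT
  have hblock : ∀ c, Nat.card {a // (tabAct w T).1 a = c} = Nat.card {a // T.1 a = c} :=
    fun c => Nat.card_congr (Equiv.subtypeEquiv w.right⁻¹ fun _ => Iff.rfl)
  refine ⟨fun i => (hblock _).trans (hσ i), fun j => (hblock _).trans (hρ j), fun a j h => ?_⟩
  change T.1 (w.right⁻¹ a) = Sum.inr j at h
  simp only [tabAct, h]

/-- Two tabloids with the same block sizes differ by a permutation matching the blocks,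
followed by a recolouring of the `σ`-blocks. -/
theorem exists_tabAct_eq {T T' : (Fin n → ℕ ⊕ ℕ) × (Fin n → G)}
    (hT : IsTabloid G n σ ρ T) (hT' : IsTabloid G n σ ρ T') :
    ∃ w : Wr G n, tabAct w T = T' := by
  have hblock : ∀ c, Nonempty ({a // T.1 a = c} ≃ {a // T'.1 a = c}) := by
    rintro (i | j)
    · exact Finite.card_eq.mp ((hT.1 i).trans (hT'.1 i).symm)
    · exact Finite.card_eq.mp ((hT.2.1 j).trans (hT'.2.1 j).symm)
  obtain ⟨π, hπ⟩ : ∃ π : Equiv.Perm (Fin n), ∀ a, T'.1 (π a) = T.1 a :=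
    ⟨_, Equiv.ofFiberEquiv_map fun c => (hblock c).some⟩
  replace hπ : ∀ a, T.1 (π.symm a) = T'.1 a := fun a => by
    rw [← hπ, Equiv.apply_symm_apply]
  refine ⟨⟨fun a => (T.2 (π.symm a))⁻¹ * T'.2 a, π⟩, Prod.ext (funext hπ) (funext fun a => ?_)⟩
  change (match T.1 (π.symm a) with
    | .inl _ => T.2 (π.symm a) * ((T.2 (π.symm a))⁻¹ * T'.2 a)
    | .inr _ => 1) = T'.2 a
  rcases h : T.1 (π.symm a) with i | j
  · simp
  · exact (hT'.2.2 a j ((hπ a).symm.trans h)).symm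

instance [Finite G] : Finite (Wr G n) :=
  Finite.of_equiv _ SemidirectProduct.equivProd.symm

abbrev Tabloid (G : Type) [CommGroup G] (n : ℕ) (σ ρ : Multiset ℕ) : Type :=
  {T : (Fin n → ℕ ⊕ ℕ) × (Fin n → G) // IsTabloid G n σ ρ T}

instance : MulAction (Wr G n) (Tabloid G n σ ρ) where
  smul w T := ⟨tabAct w T.1, isTabloid_tabAct w T.2⟩
  one_smul T := Subtype.ext (tabAct_one T.2.2.2)
  mul_smul u v T := Subtype.ext (tabAct_mul u v T.1)

theorem Tabloid.val_smul (w : Wr G n) (T : Tabloid G n σ ρ) : (w • T).1 = tabAct w T.1 := rfl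

instance : MulAction.IsPretransitive (Wr G n) (Tabloid G n σ ρ) :=
  ⟨fun T T' => (exists_tabAct_eq T.2 T'.2).imp fun _ h => Subtype.ext h⟩

end Tabloid

theorem design_bound_general (G : Type) [CommGroup G] [Fintype G]
    (n : ℕ) (σ ρ : Multiset ℕ)
    (T₀ : (Fin n → ℕ ⊕ ℕ) × (Fin n → G)) (hT₀ : IsTabloid G n σ ρ T₀)
    (Y : Set (Wr G n))
    (htrans : DPTransitive G n σ ρ Y) :
    Nat.card (Wr G n) ≤ Nat.card Y * Nat.card {w : Wr G n | tabAct w T₀ = T₀} ∧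
    (Nat.card Y * Nat.card {w : Wr G n | tabAct w T₀ = T₀} = Nat.card (Wr G n) ↔
      ∀ x ∈ Y, ∀ y ∈ Y, x ≠ y → ∀ T, IsTabloid G n σ ρ T → tabAct (x⁻¹ * y) T ≠ T) ∧
    (Nat.card Y * Nat.card {w : Wr G n | tabAct w T₀ = T₀} = Nat.card (Wr G n) →
      ∀ a, IsTabloid G n σ ρ a → ∀ b, IsTabloid G n σ ρ b →
        Nat.card {y : Wr G n // y ∈ Y ∧ tabAct y a = b} = 1) := by
  obtain ⟨c, hc, hfiber⟩ := htrans
  let T : Tabloid G n σ ρ := ⟨T₀, hT₀⟩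
  have hfiber' : ∀ a b : Tabloid G n σ ρ, Nat.card {y : Wr G n // y ∈ Y ∧ y • a = b} = c :=
    fun a b => (Nat.card_congr (Equiv.subtypeEquivRight fun _ => by
      rw [Subtype.ext_iff, Tabloid.val_smul])).trans (hfiber a.1 a.2 b.1 b.2)
  have hstab : Nat.card (MulAction.stabilizer (Wr G n) T)
      = Nat.card {w : Wr G n | tabAct w T₀ = T₀} :=
    Nat.card_congr (Equiv.subtypeEquivRight fun _ => Subtype.ext_iff)
  have hcount : Nat.card Y * Nat.card {w : Wr G n | tabAct w T₀ = T₀} = c * Nat.card (Wr G n) :=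
    hstab ▸ MulAction.card_mul_card_stabilizer_of_card_fiber hfiber' T
  have : Nonempty (Tabloid G n σ ρ) := ⟨T⟩
  have hclique : c ≤ 1 ↔
      ∀ x ∈ Y, ∀ y ∈ Y, x ≠ y → ∀ T, IsTabloid G n σ ρ T → tabAct (x⁻¹ * y) T ≠ T := by
    simpa only [Subtype.forall, ne_eq, Subtype.ext_iff, Tabloid.val_smul]
      using MulAction.le_one_iff_of_card_fiber hfiber'
  have heq : Nat.card Y * Nat.card {w : Wr G n | tabAct w T₀ = T₀} = Nat.card (Wr G n) ↔
      c = 1 := by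
    rw [hcount, Nat.mul_eq_right Nat.card_pos.ne']
  refine ⟨hcount ▸ Nat.le_mul_of_pos_left _ hc, heq.trans ?_, ?_⟩
  · exact ⟨fun h => hclique.mp h.le, fun h => le_antisymm (hclique.mpr h) hc⟩
  · intro h a ha b hb
    rw [hfiber a ha b hb, heq.mp h]

/-- **Design bound (Theorem on `(σ,ρ)`-transitive sets).**
Let `G` be a nontrivial finite abelian group, `(σ,ρ)` a double partition of `n ≥ 1`,
`H` the stabiliser in `W = G ≀ Sₙ` of a fixed `(σ,ρ)`-tabloid `T₀`, and `Y` a nonempty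
`(σ,ρ)`-transitive subset of `W`.  Then `|Y|·|H| ≥ |W|`; equality holds iff `Y` is a
`(σ,ρ)`-clique (no quotient `x⁻¹y` of distinct elements of `Y` stabilises any
`(σ,ρ)`-tabloid); and in case of equality `Y` is sharply `(σ,ρ)`-transitive. -/
theorem design_bound (G : Type) [CommGroup G] [Fintype G] [Nontrivial G]
    (n : ℕ) (hn : 1 ≤ n) (σ ρ : Multiset ℕ) (hσ0 : 0 ∉ σ) (hρ0 : 0 ∉ ρ)
    (hsum : σ.sum + ρ.sum = n)
    (T₀ : (Fin n → ℕ ⊕ ℕ) × (Fin n → G)) (hT₀ : IsTabloid G n σ ρ T₀)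
    (Y : Set (Wr G n)) (hY : Y.Nonempty)
    (htrans : DPTransitive G n σ ρ Y) :
    Nat.card (Wr G n) ≤ Nat.card Y * Nat.card {w : Wr G n | tabAct w T₀ = T₀} ∧
    (Nat.card Y * Nat.card {w : Wr G n | tabAct w T₀ = T₀} = Nat.card (Wr G n) ↔
      ∀ x ∈ Y, ∀ y ∈ Y, x ≠ y → ∀ T, IsTabloid G n σ ρ T → tabAct (x⁻¹ * y) T ≠ T) ∧
    (Nat.card Y * Nat.card {w : Wr G n | tabAct w T₀ = T₀} = Nat.card (Wr G n) →
      ∀ a, IsTabloid G n σ ρ a → ∀ b, IsTabloid G n σ ρ b →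
        Nat.card {y : Wr G n // y ∈ Y ∧ tabAct y a = b} = 1) :=
  design_bound_general G n σ ρ T₀ hT₀ Y htrans
end

section
/- Let r ≥ 1 and n ≥ 1 be integers, let Y be a nonempty subset of C_r ≀ S_n with dual distance distribution (A'_0,…,A'_n), and let t be an integer with 1 ≤ t ≤ n. If Y is a t-design, then A'_k = 0 for all k with 1 ≤ k ≤ t. Moreover, if t ≤ n/2 and A'_k = 0 for all k with 1 ≤ k ≤ t, then Y is a t-design. -/
/-- `θ(w)`: the number of fixed points of `w` on `C_r × [n]`, divided by `r`. -/
noncomputable def theta {r n : ℕ} (w : Wr (Multiplicative (ZMod r)) n) : ℕ :=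
  Nat.card {p : Multiplicative (ZMod r) × Fin n // wAct w p = p} / r

/-- The Charlier polynomial `C_k^{(a)}(x) = ∑_{j=0}^k (-1)^{k-j} binom(k,j) a^{-j} (x)_j`. -/
noncomputable def charlier (a : ℝ) (k : ℕ) (x : ℝ) : ℝ :=
  ∑ j ∈ Finset.range (k + 1),
    (-1 : ℝ) ^ (k - j) * (k.choose j : ℝ) * a⁻¹ ^ j * ∏ m ∈ Finset.range j, (x - m)

/-- `Y` is a `t`-design in `C_r ≀ Sₙ`: it is transitive on `t`-tuples of elements of
`C_r × [n]` with pairwise distinct second coordinates. -/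
def IsTDesign (r n t : ℕ) (Y : Set (Wr (Multiplicative (ZMod r)) n)) : Prop :=
  IsTransitiveOn (fun w v => fun s => wAct w (v s))
    {v : Fin t → Multiplicative (ZMod r) × Fin n | Function.Injective fun s => (v s).2} Y

/-- `Y` is a `d`-code in `C_r ≀ Sₙ` : `θ(x⁻¹y) ≤ n - d` for all distinct `x, y ∈ Y`. -/
def IsDCode (r n d : ℕ) (Y : Set (Wr (Multiplicative (ZMod r)) n)) : Prop :=
  ∀ x ∈ Y, ∀ y ∈ Y, x ≠ y → (theta (x⁻¹ * y) : ℤ) ≤ (n : ℤ) - d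

open Finset

section Transitivity

variable {W Ω : Type*} [Group W] [MulAction W Ω] [DecidableEq Ω]

def transitionCount (Y : Finset W) (a b : Ω) : ℕ := #{y ∈ Y | y • a = b}

theorem isTransitiveOn_iff_transitionCount (Y : Finset W) (S : Set Ω) :
    IsTransitiveOn (· • ·) S (Y : Set W) ↔
      ∃ c, 0 < c ∧ ∀ a ∈ S, ∀ b ∈ S, transitionCount Y a b = c := by
  simp only [IsTransitiveOn, transitionCount, ← Nat.card_eq_finsetCard, mem_filter, mem_coe]

variable {S : Finset Ω}

theorem sum_transitionCount (hS : ∀ w : W, ∀ a ∈ S, w • a ∈ S) (Y : Finset W) {a : Ω}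
    (ha : a ∈ S) :
    ∑ b ∈ S, transitionCount Y a b = #Y :=
  (card_eq_sum_card_fiberwise fun y _ => hS y a ha).symm

theorem sum_card_fixedPoints_eq_sum_sq (hS : ∀ w : W, ∀ a ∈ S, w • a ∈ S) (Y : Finset W) :
    ∑ x ∈ Y, ∑ y ∈ Y, #{a ∈ S | (x⁻¹ * y) • a = a} =
      ∑ a ∈ S, ∑ b ∈ S, transitionCount Y a b ^ 2 := by
  have hfix : ∀ x y : W, ∀ a : Ω, (x⁻¹ * y) • a = a ↔ y • a = x • a := fun x y a => by
    rw [mul_smul, inv_smul_eq_iff]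
  calc ∑ x ∈ Y, ∑ y ∈ Y, #{a ∈ S | (x⁻¹ * y) • a = a}
      = ∑ a ∈ S, ∑ x ∈ Y, transitionCount Y a (x • a) := by
        simp_rw [hfix, transitionCount, card_filter, sum_comm (s := Y) (t := S)]
    _ = ∑ a ∈ S, ∑ b ∈ S, ∑ x ∈ Y with x • a = b, transitionCount Y a (x • a) :=
        sum_congr rfl fun a ha => (sum_fiberwise_of_maps_to (fun x _ => hS x a ha) _).symm
    _ = ∑ a ∈ S, ∑ b ∈ S, transitionCount Y a b ^ 2 := by
        refine sum_congr rfl fun a _ => sum_congr rfl fun b _ => ?_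
        rw [sum_congr rfl fun x hx => by rw [(mem_filter.mp hx).2], sum_const, smul_eq_mul, sq]
        rfl

theorem isTransitiveOn_iff_sum_sq (hS : ∀ w : W, ∀ a ∈ S, w • a ∈ S) (hSne : S.Nonempty)
    {Y : Finset W} (hY : Y.Nonempty) :
    IsTransitiveOn (· • ·) (S : Set Ω) (Y : Set W) ↔
      ∑ a ∈ S, ∑ b ∈ S, transitionCount Y a b ^ 2 = #Y ^ 2 := by
  obtain ⟨a₀, ha₀⟩ := hSne
  have hrow : ∀ a ∈ S, ∑ b ∈ S, transitionCount Y a b = #Y := fun a ha =>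
    sum_transitionCount hS Y ha
  rw [isTransitiveOn_iff_transitionCount]
  constructor
  · rintro ⟨c, -, hc⟩
    have hcard : #S * c = #Y := by
      rw [← hrow a₀ ha₀, sum_congr rfl (hc a₀ ha₀), sum_const, smul_eq_mul]
    calc ∑ a ∈ S, ∑ b ∈ S, transitionCount Y a b ^ 2 = ∑ a ∈ S, ∑ b ∈ S, c ^ 2 :=
          sum_congr rfl fun a ha => sum_congr rfl fun b hb => by rw [hc a ha b hb]
      _ = #Y ^ 2 := by simp only [sum_const, smul_eq_mul, ← hcard]; ring
  · intro hsq
    have hrowℤ : ∀ a ∈ S, ∑ b ∈ S, (transitionCount Y a b : ℤ) = #Y := fun a ha => by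
      exact_mod_cast hrow a ha
    have hsqℤ : ∑ a ∈ S, ∑ b ∈ S, (transitionCount Y a b : ℤ) ^ 2 = #Y ^ 2 := by
      exact_mod_cast hsq
    -- `#S ^ 2` times the variance of the values of `transitionCount Y`, whose mean is `#Y / #S`
    have hvar : ∑ a ∈ S, ∑ b ∈ S, ((#S : ℤ) * transitionCount Y a b - #Y) ^ 2 = 0 := by
      simp only [sub_sq, mul_pow, sum_add_distrib, sum_sub_distrib, ← mul_sum, ← sum_mul,
        sum_const, nsmul_eq_mul, mul_assoc, sum_congr rfl hrowℤ]
      rw [hsqℤ]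
      ring
    have hconst : ∀ a ∈ S, ∀ b ∈ S, #S * transitionCount Y a b = #Y := by
      intro a ha b hb
      have h0 := (sum_eq_zero_iff_of_nonneg fun a _ => sum_nonneg fun b _ => sq_nonneg _).mp
        hvar a ha
      have h1 := (sum_eq_zero_iff_of_nonneg fun b _ => sq_nonneg _).mp h0 b hb
      exact_mod_cast sub_eq_zero.mp (pow_eq_zero_iff two_ne_zero |>.mp h1)
    refine ⟨transitionCount Y a₀ a₀, Nat.pos_of_ne_zero fun h0 => ?_, fun a ha b hb =>
      Nat.eq_of_mul_eq_mul_left (card_pos.mpr ⟨a₀, ha₀⟩)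
        ((hconst a ha b hb).trans (hconst a₀ ha₀ a₀ ha₀).symm)⟩
    have := hconst a₀ ha₀ a₀ ha₀
    rw [h0, mul_zero] at this
    exact hY.card_pos.ne this

theorem IsTransitiveOn.of_equivariant {Ω' : Type*} [MulAction W Ω'] [DecidableEq Ω']
    {S' : Finset Ω'} (hS' : ∀ w : W, ∀ a ∈ S', w • a ∈ S') (f : Ω' → Ω)
    (hf : ∀ (w : W) a, f (w • a) = w • f a)
    {k : ℕ} (hk : 0 < k) (hfib : ∀ b ∈ S, #{b' ∈ S' | f b' = b} = k) {Y : Finset W}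
    (hY : IsTransitiveOn (· • ·) (S' : Set Ω') (Y : Set W)) :
    IsTransitiveOn (· • ·) (S : Set Ω) (Y : Set W) := by
  obtain ⟨c, hc0, hc⟩ := (isTransitiveOn_iff_transitionCount Y _).mp hY
  refine (isTransitiveOn_iff_transitionCount Y _).mpr ⟨k * c, by positivity, fun a ha b hb => ?_⟩
  obtain ⟨a', ha'⟩ : {b' ∈ S' | f b' = a}.Nonempty := card_pos.mp (hfib a ha ▸ hk)
  rw [mem_filter] at ha'
  have hlift : ∀ y : W, y • a = y • f a' := fun y => by rw [ha'.2]
  calc transitionCount Y a b = ∑ b' ∈ S' with f b' = b, transitionCount Y a' b' := by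
        rw [transitionCount, card_eq_sum_card_fiberwise (f := (· • a')) fun y hy => ?_]
        · refine sum_congr rfl fun b' hb' => ?_
          rw [transitionCount, filter_filter]
          congr 1
          refine filter_congr fun y _ => and_iff_right_of_imp fun hy => ?_
          rw [hlift, ← hf, hy, (mem_filter.mp hb').2]
        · rw [mem_coe, mem_filter] at hy ⊢
          exact ⟨hS' y a' ha'.1, by rw [hf, ← hlift, hy.2]⟩
    _ = k * c := by
        rw [sum_congr rfl fun b' hb' => hc a' ha'.1 b' (mem_filter.mp hb').1, sum_const,
          hfib b hb, smul_eq_mul]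

end Transitivity

section InjTuples

variable {α : Type*} [Fintype α] {n : ℕ}

variable (α n) in
def injTuples (t : ℕ) : Finset (Fin t → α × Fin n) := {v | Function.Injective (Prod.snd ∘ v)}

theorem mem_injTuples {t : ℕ} {v : Fin t → α × Fin n} :
    v ∈ injTuples α n t ↔ Function.Injective (Prod.snd ∘ v) := by
  simp [injTuples]

theorem card_injTuples_tail_eq [DecidableEq α] {t : ℕ} {b : Fin t → α × Fin n}
    (hb : b ∈ injTuples α n t) :
    #{v ∈ injTuples α n (t + 1) | Fin.tail v = b} = Fintype.card α * (n - t) := by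
  have hsnd : ∀ v : Fin (t + 1) → α × Fin n,
      Prod.snd ∘ v = Fin.cons (v 0).2 (Prod.snd ∘ Fin.tail v) := fun v => by
    conv_lhs => rw [← Fin.cons_self_tail v, Fin.comp_cons]
  have hrange : Set.range (Prod.snd ∘ b) = ↑(univ.image (Prod.snd ∘ b)) := by
    rw [coe_image, coe_univ, Set.image_univ]
  calc #{v ∈ injTuples α n (t + 1) | Fin.tail v = b}
      = #((univ : Finset α) ×ˢ (univ.image (Prod.snd ∘ b))ᶜ) := by
        refine card_nbij' (fun v => v 0) (fun ω => Fin.cons ω b) ?_ ?_ ?_ ?_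
        · intro v hv
          rw [mem_coe, mem_filter, mem_injTuples, hsnd, Fin.cons_injective_iff] at hv
          obtain ⟨⟨hfresh, -⟩, rfl⟩ := hv
          simpa [← hrange] using hfresh
        · intro ω hω
          have hfresh : ω.2 ∉ Set.range (Prod.snd ∘ b) := by simpa [hrange] using hω
          simp [mem_injTuples, Fin.comp_cons, Fin.cons_injective_iff, mem_injTuples.mp hb, hfresh]
        · intro v hv
          rw [mem_coe, mem_filter] at hv
          rw [← hv.2]
          exact Fin.cons_self_tail v
        · intro ω _
          rfl
    _ = Fintype.card α * (n - t) := by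
        rw [card_product, card_univ, card_compl, card_image_of_injective _ (mem_injTuples.mp hb),
          card_univ, Fintype.card_fin, Fintype.card_fin]

theorem injTuples_nonempty [Nonempty α] {t : ℕ} (htn : t ≤ n) : (injTuples α n t).Nonempty := by
  obtain ⟨g⟩ := ‹Nonempty α›
  exact ⟨fun s => (g, Fin.castLE htn s), mem_injTuples.mpr fun _ _ h => Fin.castLE_injective htn h⟩

end InjTuples

section Wreath

variable {G : Type*} [CommGroup G] {n : ℕ}

instance : MulAction (Wr G n) (G × Fin n) where
  smul := wAct
  one_smul p := show wAct 1 p = p by simp [wAct, permMulAut]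
  mul_smul x y p := show wAct (x * y) p = wAct x (wAct y p) by
    simp [wAct, permMulAut, mul_right_comm, mul_assoc]

theorem smul_eq_wAct (w : Wr G n) (p : G × Fin n) : w • p = wAct w p := rfl

theorem wAct_eq_self_iff (w : Wr G n) (p : G × Fin n) :
    wAct w p = p ↔ w.right p.2 = p.2 ∧ w.left p.2 = 1 := by
  simp only [wAct, Prod.ext_iff, and_comm (a := _ * _ = _)]
  exact and_congr_right fun h => by rw [h, mul_eq_left]

theorem smul_mem_injTuples [Fintype G] {t : ℕ} (w : Wr G n) {v : Fin t → G × Fin n}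
    (hv : v ∈ injTuples G n t) : w • v ∈ injTuples G n t :=
  mem_injTuples.mpr fun _ _ h => mem_injTuples.mp hv (w.right.injective h)

variable [DecidableEq G]

def fixedPositions (w : Wr G n) : Finset (Fin n) := {i | w.right i = i ∧ w.left i = 1}

theorem smul_eq_self_iff_mem_fixedPositions (w : Wr G n) (p : G × Fin n) :
    w • p = p ↔ p.2 ∈ fixedPositions w := by
  simp [smul_eq_wAct, wAct_eq_self_iff, fixedPositions]

theorem card_fixed_injTuples [Fintype G] (t : ℕ) (w : Wr G n) :
    #{v ∈ injTuples G n t | w • v = v} =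
      Fintype.card G ^ t * (#(fixedPositions w)).descFactorial t := by
  have hfix : ∀ v : Fin t → G × Fin n, w • v = v ↔ ∀ s, (v s).2 ∈ fixedPositions w := fun v => by
    simp only [funext_iff, Pi.smul_apply, smul_eq_self_iff_mem_fixedPositions]
  let e : {v : Fin t → G × Fin n // Function.Injective (Prod.snd ∘ v) ∧
      ∀ s, (v s).2 ∈ fixedPositions w} ≃ (Fin t → G) × (Fin t ↪ fixedPositions w) :=
    { toFun v := (fun s => (v.1 s).1,
        ⟨fun s => ⟨(v.1 s).2, v.2.2 s⟩, fun _ _ h => v.2.1 (congrArg Subtype.val h)⟩)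
      invFun q := ⟨fun s => (q.1 s, q.2 s), fun _ _ h => q.2.injective (Subtype.ext h),
        fun s => (q.2 s).2⟩
      left_inv _ := rfl
      right_inv _ := rfl }
  have hset : {v ∈ injTuples G n t | w • v = v} =
      ({v | Function.Injective (Prod.snd ∘ v) ∧ ∀ s, (v s).2 ∈ fixedPositions w} :
        Finset (Fin t → G × Fin n)) := by
    ext v
    simp only [injTuples, mem_filter, mem_univ, true_and, hfix]
  rw [hset, ← Fintype.card_subtype, Fintype.card_congr e, Fintype.card_prod, Fintype.card_fun,
    Fintype.card_embedding_eq, Fintype.card_coe, Fintype.card_fin]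

end Wreath

section Charlier

open Polynomial

theorem charlier_zero (a x : ℝ) : charlier a 0 x = 1 := by
  simp [charlier]

-- Umbrally, `C_k^{(a)}(x)` is `(X - 1) ^ k` evaluated by the functional `X ^ j ↦ a⁻¹ ^ j (x)_j`,
-- so the Charlier inversion formula is the binomial theorem for `X = (X - 1) + 1`.
theorem charlier_eq_lsum (a : ℝ) (k : ℕ) (x : ℝ) :
    charlier a k x = lsum (fun j => LinearMap.mulRight ℝ (a⁻¹ ^ j * ∏ m ∈ range j, (x - m)))
      ((X - 1 : ℝ[X]) ^ k) := by
  rw [sub_eq_add_neg, add_pow, map_sum, charlier]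
  refine sum_congr rfl fun j _ => ?_
  rw [show (X : ℝ[X]) ^ j * (-1) ^ (k - j) * (k.choose j : ℝ[X]) =
      monomial j ((-1) ^ (k - j) * (k.choose j : ℝ)) by
    simp [← C_mul_X_pow_eq_monomial]; ring]
  simp [sum_monomial_index, mul_assoc]

theorem sum_choose_mul_charlier (a x : ℝ) (t : ℕ) :
    ∑ k ∈ range (t + 1), (t.choose k : ℝ) * charlier a k x = a⁻¹ ^ t * ∏ m ∈ range t, (x - m) := by
  have hX : (X : ℝ[X]) ^ t = ∑ k ∈ range (t + 1), (t.choose k : ℝ) • (X - 1) ^ k := by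
    conv_lhs => rw [← sub_add_cancel X 1, add_pow]
    simp [Algebra.smul_def, mul_comm]
  simp_rw [charlier_eq_lsum, ← smul_eq_mul, ← map_smul, ← map_sum, ← hX]
  simp [← monomial_one_right_eq_X_pow, sum_monomial_index]

end Charlier

section BinomialTransform

theorem eq_zero_of_sum_choose_mul_eq {R : Type*} [Ring R] {A : ℕ → R} {t : ℕ}
    (h : ∀ s ≤ t, ∑ k ∈ range (s + 1), (s.choose k : R) * A k = A 0) :
    ∀ k, 1 ≤ k → k ≤ t → A k = 0 := by
  intro k
  induction k using Nat.strong_induction_on with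
  | _ k ih =>
    intro hk hkt
    obtain ⟨m, rfl⟩ : ∃ m, k = m + 1 := ⟨k - 1, by omega⟩
    have hsum := h (m + 1) hkt
    rw [sum_range_succ, sum_range_succ', sum_eq_zero fun i hi => by
      have := mem_range.mp hi
      rw [ih (i + 1) (by omega) (by omega) (by omega), mul_zero]] at hsum
    simpa using hsum

theorem sum_choose_mul_eq_of_eq_zero {R : Type*} [Semiring R] {A : ℕ → R} {t : ℕ}
    (h : ∀ k, 1 ≤ k → k ≤ t → A k = 0) :
    ∑ k ∈ range (t + 1), (t.choose k : R) * A k = A 0 := by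
  rw [sum_range_succ', sum_eq_zero fun k hk => by
    rw [h (k + 1) (by omega) (by simp at hk; omega), mul_zero]]
  simp

end BinomialTransform

section CyclicWreath

variable {r n : ℕ} [NeZero r]

theorem theta_eq_card_fixedPositions (w : Wr (Multiplicative (ZMod r)) n) :
    theta w = #(fixedPositions w) := by
  have hfix : ({p | wAct w p = p} : Finset (Multiplicative (ZMod r) × Fin n)) =
      univ ×ˢ fixedPositions w := by
    ext p
    simp [wAct_eq_self_iff, fixedPositions]
  rw [theta, Nat.card_eq_fintype_card, Fintype.card_subtype, hfix, card_product, card_univ,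
    Fintype.card_multiplicative, ZMod.card, Nat.mul_div_cancel_left _ (NeZero.pos r)]

theorem card_fixed_injTuples_eq_sum_charlier (t : ℕ) (w : Wr (Multiplicative (ZMod r)) n) :
    (#{v ∈ injTuples (Multiplicative (ZMod r)) n t | w • v = v} : ℝ) =
      ∑ k ∈ range (t + 1), (t.choose k : ℝ) * charlier (1 / r) k (theta w) := by
  rw [sum_choose_mul_charlier, card_fixed_injTuples, theta_eq_card_fixedPositions, one_div,
    inv_inv, ← descPochhammer_eval_eq_prod_range, descPochhammer_eval_eq_descFactorial]
  simp

theorem isTDesign_iff_isTransitiveOn (t : ℕ) (Y : Set (Wr (Multiplicative (ZMod r)) n)) :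
    IsTDesign r n t Y ↔ IsTransitiveOn (· • ·)
      (injTuples (Multiplicative (ZMod r)) n t : Set (Fin t → Multiplicative (ZMod r) × Fin n))
      Y := by
  have hS : (injTuples (Multiplicative (ZMod r)) n t :
      Set (Fin t → Multiplicative (ZMod r) × Fin n)) =
        {v | Function.Injective fun s => (v s).2} := by
    ext v
    exact mem_injTuples
  rw [hS]
  rfl

theorem IsTDesign.of_succ {t : ℕ} (ht : t + 1 ≤ n) {Y : Finset (Wr (Multiplicative (ZMod r)) n)}
    (hY : IsTDesign r n (t + 1) ↑Y) : IsTDesign r n t ↑Y := by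
  rw [isTDesign_iff_isTransitiveOn] at hY ⊢
  refine hY.of_equivariant (fun w _ => smul_mem_injTuples w) Fin.tail (fun _ _ => rfl)
    (Nat.mul_pos (NeZero.pos r) (Nat.sub_pos_of_lt ht)) fun b hb => ?_
  rw [card_injTuples_tail_eq hb, Fintype.card_multiplicative, ZMod.card]

theorem IsTDesign.mono {s t : ℕ} (hst : s ≤ t) (htn : t ≤ n)
    {Y : Finset (Wr (Multiplicative (ZMod r)) n)} (hY : IsTDesign r n t ↑Y) :
    IsTDesign r n s ↑Y := by
  induction t, hst using Nat.le_induction with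
  | base => exact hY
  | succ t _ ih => exact ih (by omega) (hY.of_succ htn)

end CyclicWreath

section DualDistance

variable {r n : ℕ}

noncomputable def dualDistance (Y : Finset (Wr (Multiplicative (ZMod r)) n)) (k : ℕ) : ℝ :=
  (1 / (Y.card : ℝ)) * ∑ x ∈ Y, ∑ y ∈ Y, charlier (1 / r) k (theta (x⁻¹ * y))

theorem dualDistance_zero {Y : Finset (Wr (Multiplicative (ZMod r)) n)} (hY : Y.Nonempty) :
    dualDistance Y 0 = #Y := by
  have hYne : (#Y : ℝ) ≠ 0 := by exact_mod_cast hY.card_pos.ne'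
  simp only [dualDistance, charlier_zero, sum_const, nsmul_eq_mul, mul_one]
  rw [one_div, inv_mul_cancel_left₀ hYne]

theorem card_mul_sum_choose_mul_dualDistance [NeZero r]
    {Y : Finset (Wr (Multiplicative (ZMod r)) n)} (hY : Y.Nonempty) (t : ℕ) :
    #Y * ∑ k ∈ range (t + 1), (t.choose k : ℝ) * dualDistance Y k =
      ∑ x ∈ Y, ∑ y ∈ Y,
        (#{v ∈ injTuples (Multiplicative (ZMod r)) n t | (x⁻¹ * y) • v = v} : ℝ) := by
  have hYne : (#Y : ℝ) ≠ 0 := by exact_mod_cast hY.card_pos.ne'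
  simp_rw [card_fixed_injTuples_eq_sum_charlier, mul_sum, dualDistance, mul_left_comm (#Y : ℝ),
    one_div, inv_mul_cancel_left₀ hYne, mul_sum]
  rw [sum_comm]
  exact sum_congr rfl fun _ _ => sum_comm

theorem isTDesign_iff_sum_choose_mul_dualDistance [NeZero r]
    {Y : Finset (Wr (Multiplicative (ZMod r)) n)} (hY : Y.Nonempty) {t : ℕ} (htn : t ≤ n) :
    IsTDesign r n t ↑Y ↔ ∑ k ∈ range (t + 1), (t.choose k : ℝ) * dualDistance Y k = #Y := by
  have hYne : (#Y : ℝ) ≠ 0 := by exact_mod_cast hY.card_pos.ne'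
  rw [isTDesign_iff_isTransitiveOn, isTransitiveOn_iff_sum_sq (fun w _ => smul_mem_injTuples w)
    (injTuples_nonempty htn) hY, ← sum_card_fixedPoints_eq_sum_sq (fun w _ => smul_mem_injTuples w),
    ← mul_right_inj' hYne, card_mul_sum_choose_mul_dualDistance hY, ← sq]
  exact_mod_cast Iff.rfl

end DualDistance

theorem t_design_dual_distance_general (r n : ℕ) (hr : 1 ≤ r)
    (Y : Finset (Wr (Multiplicative (ZMod r)) n)) (hY : Y.Nonempty)
    (A' : ℕ → ℝ)
    (hA' : ∀ k, A' k =
      (1 / (Y.card : ℝ)) * ∑ x ∈ Y, ∑ y ∈ Y, charlier (1 / r) k (theta (x⁻¹ * y)))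
    (t : ℕ) (htn : t ≤ n) :
    (IsTDesign r n t ↑Y → ∀ k, 1 ≤ k → k ≤ t → A' k = 0) ∧
    (2 * t ≤ n → (∀ k, 1 ≤ k → k ≤ t → A' k = 0) → IsTDesign r n t ↑Y) := by
  have : NeZero r := ⟨by omega⟩
  obtain rfl : A' = dualDistance Y := funext hA'
  refine ⟨fun hd => eq_zero_of_sum_choose_mul_eq fun s hst => ?_, fun _ hzero => ?_⟩
  · rw [dualDistance_zero hY, ← isTDesign_iff_sum_choose_mul_dualDistance hY (hst.trans htn)]
    exact hd.mono hst htn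
  · rw [isTDesign_iff_sum_choose_mul_dualDistance hY htn, ← dualDistance_zero hY]
    exact sum_choose_mul_eq_of_eq_zero hzero

/-- **`t`-designs and the dual distance distribution.**
Let `r, n ≥ 1`, let `Y` be a nonempty subset of `C_r ≀ Sₙ` with dual distance
distribution `A'_k = (1/|Y|) ∑_{x,y ∈ Y} C_k^{(1/r)}(θ(x⁻¹y))`, and let `1 ≤ t ≤ n`.
If `Y` is a `t`-design then `A'_k = 0` for `1 ≤ k ≤ t`; and conversely, if `t ≤ n/2`
and `A'_k = 0` for all `1 ≤ k ≤ t`, then `Y` is a `t`-design. -/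
theorem t_design_dual_distance (r n : ℕ) (hr : 1 ≤ r) (hn : 1 ≤ n)
    (Y : Finset (Wr (Multiplicative (ZMod r)) n)) (hY : Y.Nonempty)
    (A' : ℕ → ℝ)
    (hA' : ∀ k, A' k =
      (1 / (Y.card : ℝ)) * ∑ x ∈ Y, ∑ y ∈ Y, charlier (1 / r) k (theta (x⁻¹ * y)))
    (t : ℕ) (ht1 : 1 ≤ t) (htn : t ≤ n) :
    (IsTDesign r n t ↑Y → ∀ k, 1 ≤ k → k ≤ t → A' k = 0) ∧
    (2 * t ≤ n → (∀ k, 1 ≤ k → k ≤ t → A' k = 0) → IsTDesign r n t ↑Y) :=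
  t_design_dual_distance_general r n hr Y hY A' hA' t htn
end
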